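/- arXiv:math/9808104 — 5 statements merged into one kernel-verified Lean document; each statement's English description precedes it below -/
import Mathlib

section
/- Let B be a Boolean algebra, θ a regular cardinal, and ⟨a_α : α < θ⟩ a sequence of elements of an ideal I of B. For b ∈ I let F_b = {α < θ : a_α ≰ b}, and let D₀ be the (<θ)-complete filter on θ generated by {F_b : b ∈ I}. Suppose that for every Z ⊆ I with |Z| < θ there is α < θ such that a_α ≰ b for all b ∈ Z (so D₀ is a proper filter). Then the set A⁺ = {α < θ : a_α belongs to the ideal of B generated by {a_β : β < α}} does not belong to D₀. -/
universe u

/-- The set `A⁺ = {α < θ : a_α ∈ id_B({a_β : β < α})}` does not belong to the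
`(<θ)`-complete filter `D₀` on `θ` generated by the sets `F_b = {α < θ : a_α ≰ b}` (`b ∈ I`),
assuming `D₀` is proper (for every `Z ⊆ I` of size `< θ` some `a_α` is below no member of `Z`).
Membership of `X` in `D₀` is expressed as: there is `Z ⊆ I` with `|Z| < θ` such that
`⋂_{b ∈ Z} F_b ⊆ X`. -/
theorem aplus_not_in_filter
    {B : Type u} [BooleanAlgebra B] (I : Order.Ideal B) (θ : Cardinal.{u})
    (hθ : θ.IsRegular)
    (a : Ordinal.{u} → B) (ha : ∀ α < θ.ord, a α ∈ I)
    (hproper : ∀ Z : Set B, Z ⊆ ↑I → Cardinal.mk Z < θ →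
      ∃ α < θ.ord, ∀ b ∈ Z, ¬ a α ≤ b) :
    ¬ ∃ Z : Set B, Z ⊆ ↑I ∧ Cardinal.mk Z < θ ∧
        {α : Ordinal.{u} | α < θ.ord ∧ ∀ b ∈ Z, ¬ a α ≤ b} ⊆
        {α : Ordinal.{u} | α < θ.ord ∧
          ∃ s : Finset Ordinal.{u}, (∀ β ∈ s, β < α) ∧ a α ≤ s.sup a} := by
  classical
  rintro ⟨Z, hZI, hZcard, hsub⟩
  -- closure of Z under finite suprema
  set W : Set B := {b | ∃ t : Finset B, ↑t ⊆ Z ∧ b = t.sup id} with hW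
  have hZW : Z ⊆ W := fun b hb => ⟨{b}, by simpa using hb, by simp⟩
  have hbotW : (⊥ : B) ∈ W := ⟨∅, by simp, by simp⟩
  have hsupW : ∀ x ∈ W, ∀ y ∈ W, x ⊔ y ∈ W := by
    rintro x ⟨t, ht, rfl⟩ y ⟨u, hu, rfl⟩
    exact ⟨t ∪ u, by simp [Set.union_subset_iff]; exact ⟨ht, hu⟩,
      by rw [Finset.sup_union]⟩
  have hWI : W ⊆ ↑I := by
    rintro b ⟨t, ht, rfl⟩
    induction t using Finset.induction with
    | empty => simpa using I.bot_mem
    | @insert x t hx ih =>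
        rw [Finset.sup_insert]
        exact I.sup_mem (hZI (ht (Finset.mem_insert_self _ _)))
          (ih fun y hy => ht (Finset.mem_insert_of_mem hy))
  -- |W| < θ
  have hWcard : Cardinal.mk W < θ := by
    have hrange : W ⊆ Set.range (fun t : Finset Z => (t.image Subtype.val).sup id) := by
      rintro b ⟨t, ht, rfl⟩
      refine ⟨t.attach.image fun x => (⟨x.1, ht x.2⟩ : Z), ?_⟩
      have : ((t.attach.image fun x => (⟨x.1, ht x.2⟩ : Z)).image Subtype.val) = t := by
        ext x
        simp
        exact fun hx => ht hx
      simp only [this]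
    have h1 : Cardinal.mk W ≤ Cardinal.mk (Finset Z) :=
      le_trans (Cardinal.mk_le_mk_of_subset hrange) Cardinal.mk_range_le
    rcases Set.finite_or_infinite Z with hf | hi
    · have : Finite Z := hf.to_subtype
      have := Fintype.ofFinite Z
      exact lt_of_le_of_lt h1 (lt_of_lt_of_le (Cardinal.lt_aleph0_of_finite _) hθ.aleph0_le)
    · have : Infinite Z := hi.to_subtype
      rw [Cardinal.mk_finset_of_infinite] at h1
      exact lt_of_le_of_lt h1 hZcard
  -- F_W is nonempty; pick a minimal element α
  obtain ⟨α₀, hα₀θ, hα₀⟩ := hproper W hWI hWcard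
  have hne : {α : Ordinal.{u} | α < θ.ord ∧ ∀ b ∈ W, ¬ a α ≤ b}.Nonempty :=
    ⟨α₀, hα₀θ, hα₀⟩
  obtain ⟨α, ⟨hαθ, hαW⟩, hmin⟩ := (Ordinal.lt_wf).has_min _ hne
  -- α ∈ F_Z ⊆ A⁺
  have hαFZ : α ∈ {α : Ordinal.{u} | α < θ.ord ∧ ∀ b ∈ Z, ¬ a α ≤ b} :=
    ⟨hαθ, fun b hb => hαW b (hZW hb)⟩
  obtain ⟨-, s, hs, hsup⟩ := hsub hαFZ
  -- each β ∈ s lies below some member of W, by minimality of α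
  have hchoice : ∀ β ∈ s, ∃ b ∈ W, a β ≤ b := by
    intro β hβ
    have hβα := hs β hβ
    have hβθ : β < θ.ord := lt_trans hβα hαθ
    by_contra h
    push_neg at h
    exact hmin β ⟨hβθ, fun b hb hab => h b hb hab⟩ hβα
  choose f hf1 hf2 using hchoice
  set g : Ordinal.{u} → B := fun β => if h : β ∈ s then f β h else ⊥ with hg
  have hgW : ∀ u : Finset Ordinal.{u}, (∀ β ∈ u, β ∈ s) → u.sup g ∈ W := by
    intro u
    induction u using Finset.induction with
    | empty => intro _; simpa using hbotW
    | @insert x t hx ih =>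
        intro hu
        rw [Finset.sup_insert]
        have hxs : x ∈ s := hu x (Finset.mem_insert_self x t)
        refine hsupW _ ?_ _ (ih fun y hy => hu y (Finset.mem_insert_of_mem hy))
        simp only [hg, dif_pos hxs]
        exact hf1 x hxs
  have hag : a α ≤ s.sup g := by
    refine le_trans hsup (Finset.sup_mono_fun ?_)
    intro β hβ
    simp only [hg, dif_pos hβ]
    exact hf2 β hβ
  exact hαW _ (hgW s fun _ h => h) hag
end

section
/- Let w be a set, F ⊆ 2^w, and B_{(w,F)} the associated Boolean algebra. For a Boolean term τ(y₀,…,y_ℓ) and distinct α₀,…,α_ℓ ∈ w, we have B_{(w,F)} ⊨ τ(x_{α₀},…,x_{α_ℓ}) ≠ 0 if and only if there exists f ∈ F with τ(f(α₀),…,f(α_ℓ)) = 1 computed in {0,1}. -/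
universe u v w'

/-- Boolean terms in `n` variables. -/
inductive BoolTerm (n : ℕ) : Type
  | var : Fin n → BoolTerm n
  | bot : BoolTerm n
  | top : BoolTerm n
  | not : BoolTerm n → BoolTerm n
  | and : BoolTerm n → BoolTerm n → BoolTerm n
  | or : BoolTerm n → BoolTerm n → BoolTerm n

/-- Evaluation of a Boolean term in a Boolean algebra. -/
def BoolTerm.eval {n : ℕ} {C : Type v} [BooleanAlgebra C] (val : Fin n → C) :
    BoolTerm n → C
  | var i => val i
  | bot => ⊥
  | top => ⊤
  | not t => (t.eval val)ᶜ
  | and t₁ t₂ => t₁.eval val ⊓ t₂.eval val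
  | or t₁ t₂ => t₁.eval val ⊔ t₂.eval val

/-- The family `y : w → C` satisfies the defining relations of `B_{(w,F)}`. -/
def SatisfiesRelations {w : Type u} (F : Set (w → Bool)) {C : Type v} [BooleanAlgebra C]
    (y : w → C) : Prop :=
  ∀ u₀ u₁ : Finset w,
    (¬ ∃ f ∈ F, (∀ α ∈ u₀, f α = false) ∧ (∀ α ∈ u₁, f α = true)) →
    u₁.inf y ⊓ u₀.inf (fun α => (y α)ᶜ) = ⊥

/-- `B` with generators `x : w → B` is (a copy of) the Boolean algebra `B_{(w,F)}`. -/
def IsBwF {w : Type u} (F : Set (w → Bool)) (B : Type v) [BooleanAlgebra B]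
    (x : w → B) : Prop :=
  SatisfiesRelations F x ∧
    ∀ (C : Type w') [BooleanAlgebra C], ∀ y : w → C, SatisfiesRelations F y →
      ∃! g : BoundedLatticeHom B C, ∀ α : w, g (x α) = y α

noncomputable instance : HImp (ULift.{w'} Bool) := ⟨fun a b => ULift.up (a.down ⇨ b.down)⟩

noncomputable instance : BooleanAlgebra (ULift.{w'} Bool) :=
  ULift.down_injective.booleanAlgebra _ Iff.rfl Iff.rfl (fun _ _ => rfl) (fun _ _ => rfl) rfl rfl
    (fun _ => rfl) (fun _ _ => rfl) (fun _ _ => rfl)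

section helpers

variable {C : Type*} [BooleanAlgebra C] {n : ℕ}

/-- The "atom" associated to a boolean assignment `s`. -/
def BAtom (val : Fin n → C) (s : Fin n → Bool) : C :=
  Finset.univ.inf fun i => cond (s i) (val i) (val i)ᶜ

lemma eval_map {B : Type*} [BooleanAlgebra B] (g : BoundedLatticeHom B C)
    (τ : BoolTerm n) (val : Fin n → B) :
    g (τ.eval val) = τ.eval fun i => g (val i) := by
  induction τ with
  | var i => rfl
  | bot => simp [BoolTerm.eval]
  | top => simp [BoolTerm.eval]
  | not t ih => simp [BoolTerm.eval, map_compl', ih]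
  | and t₁ t₂ ih₁ ih₂ => simp [BoolTerm.eval, map_inf, ih₁, ih₂]
  | or t₁ t₂ ih₁ ih₂ => simp [BoolTerm.eval, map_sup, ih₁, ih₂]

lemma eval_up (τ : BoolTerm n) (val : Fin n → Bool) :
    τ.eval (fun i => (ULift.up (val i) : ULift.{w'} Bool)) = ULift.up (τ.eval val) := by
  induction τ with
  | var i => rfl
  | bot => rfl
  | top => rfl
  | not t ih => show _ᶜ = _; rw [ih]; rfl
  | and t₁ t₂ ih₁ ih₂ => show _ ⊓ _ = _; rw [ih₁, ih₂]; rfl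
  | or t₁ t₂ ih₁ ih₂ => show _ ⊔ _ = _; rw [ih₁, ih₂]; rfl

lemma batom_cover : ∀ (n : ℕ) (val : Fin n → C),
    (Finset.univ.sup fun s : Fin n → Bool => BAtom val s) = ⊤ := by
  intro n
  induction n with
  | zero =>
    intro val
    refine le_antisymm le_top ?_
    calc (⊤ : C) = BAtom val (fun i => i.elim0) := by simp [BAtom]
      _ ≤ _ := Finset.le_sup (Finset.mem_univ _)
  | succ m ih =>
    intro val
    refine le_antisymm le_top ?_
    have key : ∀ (b : Bool) (s' : Fin m → Bool),
        cond b (val 0) (val 0)ᶜ ⊓ BAtom (fun i => val i.succ) s' ≤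
          Finset.univ.sup fun s : Fin (m + 1) → Bool => BAtom val s := by
      intro b s'
      have : cond b (val 0) (val 0)ᶜ ⊓ BAtom (fun i => val i.succ) s'
          = BAtom val (Fin.cons b s') := by
        unfold BAtom
        rw [Fin.univ_succ, Finset.inf_cons, Finset.inf_map]
        simp [Function.comp_def, Fin.cons_succ]
      rw [this]
      exact Finset.le_sup (Finset.mem_univ _)
    calc (⊤ : C) = (val 0 ⊔ (val 0)ᶜ) ⊓
          Finset.univ.sup (fun s' : Fin m → Bool => BAtom (fun i => val i.succ) s') := by
            rw [sup_compl_eq_top, ih]; simp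
      _ = (val 0 ⊓ Finset.univ.sup (fun s' : Fin m → Bool => BAtom (fun i => val i.succ) s'))
          ⊔ ((val 0)ᶜ ⊓ Finset.univ.sup (fun s' : Fin m → Bool => BAtom (fun i => val i.succ) s')) :=
            inf_sup_right _ _ _
      _ ≤ _ := by
        refine sup_le ?_ ?_
        · rw [Finset.sup_inf_distrib_left]
          exact Finset.sup_le fun s' _ => key true s'
        · rw [Finset.sup_inf_distrib_left]
          exact Finset.sup_le fun s' _ => key false s'

lemma batom_le (τ : BoolTerm n) (val : Fin n → C) (s : Fin n → Bool) :
    BAtom val s ≤ cond (τ.eval s) (τ.eval val) (τ.eval val)ᶜ := by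
  induction τ with
  | var i => exact Finset.inf_le (Finset.mem_univ i)
  | bot =>
    have : BoolTerm.eval s (.bot : BoolTerm n) = false := rfl
    rw [this]
    simp [BoolTerm.eval]
  | top =>
    have : BoolTerm.eval s (.top : BoolTerm n) = true := rfl
    rw [this]
    simp [BoolTerm.eval]
  | not t ih =>
    show BAtom val s ≤ cond ((BoolTerm.eval s t)ᶜ) _ _
    cases hb : BoolTerm.eval s t <;> rw [hb] at ih <;>
      simpa [BoolTerm.eval] using ih
  | and t₁ t₂ ih₁ ih₂ =>
    show BAtom val s ≤ cond (BoolTerm.eval s t₁ ⊓ BoolTerm.eval s t₂) _ _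
    cases h1 : BoolTerm.eval s t₁ <;> cases h2 : BoolTerm.eval s t₂ <;>
      rw [h1] at ih₁ <;> rw [h2] at ih₂ <;> simp only [cond] at ih₁ ih₂ ⊢
    · exact ih₁.trans (by simp [BoolTerm.eval, compl_inf, le_sup_left])
    · exact ih₁.trans (by simp [BoolTerm.eval, compl_inf, le_sup_left])
    · exact ih₂.trans (by simp [BoolTerm.eval, compl_inf, le_sup_right])
    · exact le_inf ih₁ ih₂
  | or t₁ t₂ ih₁ ih₂ =>
    show BAtom val s ≤ cond (BoolTerm.eval s t₁ ⊔ BoolTerm.eval s t₂) _ _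
    cases h1 : BoolTerm.eval s t₁ <;> cases h2 : BoolTerm.eval s t₂ <;>
      rw [h1] at ih₁ <;> rw [h2] at ih₂ <;> simp only [cond] at ih₁ ih₂ ⊢
    · exact le_inf ih₁ ih₂ |>.trans (by simp [BoolTerm.eval, compl_sup])
    · exact ih₂.trans (by simp [BoolTerm.eval, le_sup_right])
    · exact ih₁.trans (by simp [BoolTerm.eval, le_sup_left])
    · exact ih₁.trans (by simp [BoolTerm.eval, le_sup_left])

end helpers

/-- For a Boolean term `τ` and distinct `α₀, …, α_ℓ ∈ w`, the value
`τ(x_{α₀},…,x_{α_ℓ})` is nonzero in `B_{(w,F)}` iff some `f ∈ F` makes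
`τ(f(α₀),…,f(α_ℓ)) = 1` in `{0,1}`. -/
theorem term_ne_bot_iff {w : Type u} (F : Set (w → Bool)) (B : Type v) [BooleanAlgebra B]
    (x : w → B) (h : IsBwF.{u, v, w'} F B x)
    (n : ℕ) (τ : BoolTerm n) (α : Fin n → w) (hα : Function.Injective α) :
    τ.eval (fun i => x (α i)) ≠ ⊥ ↔
      ∃ f ∈ F, τ.eval (fun i => f (α i)) = true := by
  classical
  set val : Fin n → B := fun i => x (α i) with hval
  constructor
  · -- contrapositive
    intro hne
    by_contra hno
    apply hne
    -- every atom with true evaluation is ⊥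
    have hatom : ∀ s : Fin n → Bool, τ.eval s = true → BAtom val s = ⊥ := by
      intro s hs
      set u₁ : Finset w := (Finset.univ.filter fun i => s i = true).image α with hu₁
      set u₀ : Finset w := (Finset.univ.filter fun i => s i = false).image α with hu₀
      have hrel : u₁.inf x ⊓ u₀.inf (fun β => (x β)ᶜ) = ⊥ := by
        apply h.1
        rintro ⟨f, hf, h0, h1⟩
        apply hno
        refine ⟨f, hf, ?_⟩
        have : (fun i => f (α i)) = s := by
          funext i
          cases hsi : s i
          · exact h0 _ (Finset.mem_image_of_mem α (by simp [hsi]))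
          · exact h1 _ (Finset.mem_image_of_mem α (by simp [hsi]))
        rw [this, hs]
      refine le_bot_iff.mp (le_of_le_of_eq (le_inf ?_ ?_) hrel)
      · rw [hu₁, Finset.inf_image]
        refine Finset.le_inf fun i hi => ?_
        have hsi : s i = true := (Finset.mem_filter.mp hi).2
        refine (Finset.inf_le (Finset.mem_univ i)).trans_eq ?_
        simp [hsi, hval]
      · rw [hu₀, Finset.inf_image]
        refine Finset.le_inf fun i hi => ?_
        have hsi : s i = false := (Finset.mem_filter.mp hi).2
        refine (Finset.inf_le (Finset.mem_univ i)).trans_eq ?_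
        simp [hsi, hval]
    refine le_bot_iff.mp ?_
    calc τ.eval val = τ.eval val ⊓ Finset.univ.sup fun s : Fin n → Bool => BAtom val s := by
          rw [batom_cover]; simp
      _ = Finset.univ.sup fun s : Fin n → Bool => τ.eval val ⊓ BAtom val s :=
          Finset.sup_inf_distrib_left _ _ _
      _ ≤ ⊥ := by
        refine Finset.sup_le fun s _ => ?_
        cases hs : τ.eval s
        · have := batom_le τ val s
          rw [hs] at this
          simp only [cond] at this
          calc BoolTerm.eval val τ ⊓ BAtom val s ≤ BoolTerm.eval val τ ⊓ (BoolTerm.eval val τ)ᶜ :=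
                inf_le_inf_left _ this
            _ = ⊥ := inf_compl_eq_bot
        · rw [hatom s hs]; simp
  · rintro ⟨f, hf, heval⟩
    intro hbot
    -- build the two-valued quotient
    set y : w → ULift.{w'} Bool := fun β => ULift.up (f β) with hy
    have hSR : SatisfiesRelations F y := by
      intro u₀ u₁ hno
      by_contra hne
      apply hno
      refine ⟨f, hf, fun β hb => ?_, fun β hb => ?_⟩
      · cases hfb : f β
        · rfl
        · exfalso
          apply hne
          refine le_bot_iff.mp ((inf_le_right).trans ?_)
          refine (Finset.inf_le hb).trans_eq ?_
          show (y β)ᶜ = ⊥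
          rw [hy]; simp only; rw [hfb]; rfl
      · cases hfb : f β
        · exfalso
          apply hne
          refine le_bot_iff.mp ((inf_le_left).trans ?_)
          refine (Finset.inf_le hb).trans_eq ?_
          show y β = ⊥
          rw [hy]; simp only; rw [hfb]; rfl
        · rfl
    obtain ⟨g, hg, -⟩ := h.2 (ULift.{w'} Bool) y hSR
    have : g (τ.eval val) = τ.eval fun i => y (α i) := by
      rw [eval_map]
      congr 1
      funext i
      rw [hg]
    rw [hbot, map_bot] at this
    have h2 : τ.eval (fun i => y (α i)) = ULift.up true := by
      show τ.eval (fun i => (ULift.up (f (α i)) : ULift.{w'} Bool)) = _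
      rw [eval_up, heval]
    rw [h2] at this
    exact Bool.false_ne_true (congrArg ULift.down this)
end

section
/- Let w ⊆ w*, F ⊆ 2^w, F* ⊆ 2^{w*}. Define cl(F) = {g ∈ 2^w : for every finite u ⊆ w there is f ∈ F with f↾u = g↾u}. If every f ∈ F extends to some g ∈ F*, and for every g ∈ F* the restriction g↾w lies in cl(F), then B_{(w,F)} is a subalgebra of B_{(w*,F*)} (via the map sending each generator x_α of B_{(w,F)} to the corresponding generator of B_{(w*,F*)}). -/
universe u v v' w'

/-- The closure `cl(F)` of `F ⊆ 2^w`: all `g` agreeing with some member of `F` on every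
finite subset of `w`. -/
def clF {w : Type u} (F : Set (w → Bool)) : Set (w → Bool) :=
  {g | ∀ u : Finset w, ∃ f ∈ F, ∀ α ∈ u, f α = g α}

namespace BwFAux
noncomputable section
universe r

instance : Max (ULift.{r} Bool) := ⟨fun a b => ⟨a.down ⊔ b.down⟩⟩
instance : Min (ULift.{r} Bool) := ⟨fun a b => ⟨a.down ⊓ b.down⟩⟩
instance : Top (ULift.{r} Bool) := ⟨⟨⊤⟩⟩
instance : Bot (ULift.{r} Bool) := ⟨⟨⊥⟩⟩
instance : HasCompl (ULift.{r} Bool) := ⟨fun a => ⟨a.downᶜ⟩⟩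
instance : SDiff (ULift.{r} Bool) := ⟨fun a b => ⟨a.down \ b.down⟩⟩
instance : HImp (ULift.{r} Bool) := ⟨fun a b => ⟨a.down ⇨ b.down⟩⟩

instance : BooleanAlgebra (ULift.{r} Bool) :=
  Function.Injective.booleanAlgebra ULift.down ULift.down_injective
    Iff.rfl Iff.rfl (fun _ _ => rfl) (fun _ _ => rfl) rfl rfl (fun _ => rfl) (fun _ _ => rfl) (fun _ _ => rfl)

def downHom : BoundedLatticeHom (ULift.{r} Bool) Bool :=
  ⟨⟨⟨ULift.down, fun _ _ => rfl⟩, fun _ _ => rfl⟩, rfl, rfl⟩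

def upHom : BoundedLatticeHom Bool (ULift.{r} Bool) :=
  ⟨⟨⟨ULift.up, fun _ _ => rfl⟩, fun _ _ => rfl⟩, rfl, rfl⟩

/-- Separation: if `¬ a ≤ b` in a Boolean algebra, some `Bool`-valued hom separates them. -/
lemma exists_boolHom_of_not_le {C : Type*} [BooleanAlgebra C] {a b : C} (h : ¬ a ≤ b) :
    ∃ φ : BoundedLatticeHom C Bool, φ a = true ∧ φ b = false := by
  classical
  obtain ⟨J, hJ, hbJ, haJ⟩ :
      ∃ J : Order.Ideal C, J.IsPrime ∧ b ∈ J ∧ a ∉ J := by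
    have hdisj : Disjoint ((Order.PFilter.principal a : Order.PFilter C) : Set C)
        ((Order.Ideal.principal b : Order.Ideal C) : Set C) := by
      rw [Set.disjoint_left]
      intro c hc hc'
      rw [SetLike.mem_coe, Order.PFilter.mem_principal] at hc
      rw [SetLike.mem_coe, Order.Ideal.mem_principal] at hc'
      exact h (le_trans hc hc')
    obtain ⟨J, hJ, hIJ, hdisj'⟩ := DistribLattice.prime_ideal_of_disjoint_filter_ideal hdisj
    refine ⟨J, hJ, hIJ Order.Ideal.mem_principal_self, fun haJ => ?_⟩
    exact Set.disjoint_left.1 hdisj'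
      (by rw [SetLike.mem_coe, Order.PFilter.mem_principal]) haJ
  have hmem_sup : ∀ c d : C, c ⊔ d ∈ J ↔ c ∈ J ∧ d ∈ J := fun c d =>
    ⟨fun hcd => ⟨J.lower le_sup_left hcd, J.lower le_sup_right hcd⟩,
     fun h => J.sup_mem h.1 h.2⟩
  have hmem_inf : ∀ c d : C, c ⊓ d ∈ J ↔ c ∈ J ∨ d ∈ J := fun c d =>
    ⟨hJ.mem_or_mem, fun h => h.elim (J.lower inf_le_left) (J.lower inf_le_right)⟩
  refine ⟨⟨⟨⟨fun c => decide (c ∉ J), fun c d => ?_⟩, fun c d => ?_⟩, ?_, ?_⟩, ?_, ?_⟩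
  · by_cases hc : c ∈ J <;> by_cases hd : d ∈ J <;>
      simp [hmem_sup c d, hc, hd]
  · by_cases hc : c ∈ J <;> by_cases hd : d ∈ J <;>
      simp [hmem_inf c d, hc, hd]
  · simp [hJ.toIsProper.top_notMem]
  · simp [J.bot_mem]
  · simp [haJ]
  · simp [hbJ]

lemma exists_boolHom_ne {C : Type*} [BooleanAlgebra C] {a b : C} (hab : a ≠ b) :
    ∃ φ : BoundedLatticeHom C Bool, φ a ≠ φ b := by
  rcases (not_and_or.1 (fun hle : a ≤ b ∧ b ≤ a => hab (le_antisymm hle.1 hle.2))) with h | h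
  · obtain ⟨φ, h1, h2⟩ := exists_boolHom_of_not_le h
    exact ⟨φ, by rw [h1, h2]; simp⟩
  · obtain ⟨φ, h1, h2⟩ := exists_boolHom_of_not_le h
    exact ⟨φ, by rw [h1, h2]; simp⟩

/-- A pattern in the closure of `F` satisfies the relations (with `ULift Bool` values). -/
lemma satisfiesRelations_of_mem_clF {I : Type*} (F : Set (I → Bool)) {h : I → Bool}
    (hh : h ∈ clF F) :
    SatisfiesRelations F (fun i => (⟨h i⟩ : ULift.{r} Bool)) := by
  classical
  intro u₀ u₁ hno
  by_cases H1 : ∀ i ∈ u₁, h i = true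
  · by_cases H0 : ∀ i ∈ u₀, h i = false
    · exfalso
      obtain ⟨f, hf, hagree⟩ := hh (u₀ ∪ u₁)
      exact hno ⟨f, hf,
        fun i hi => by rw [hagree i (Finset.mem_union_left _ hi)]; exact H0 i hi,
        fun i hi => by rw [hagree i (Finset.mem_union_right _ hi)]; exact H1 i hi⟩
    · push_neg at H0
      obtain ⟨i, hi, hne⟩ := H0
      have hit : h i = true := by cases hhi : h i <;> simp_all
      have h1 : (fun α => ((⟨h α⟩ : ULift.{r} Bool))ᶜ) i = ⊥ := by
        simp only [hit]
        exact compl_top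
      have : u₀.inf (fun α => ((⟨h α⟩ : ULift.{r} Bool))ᶜ) ≤ ⊥ := h1 ▸ Finset.inf_le hi
      exact le_bot_iff.1 (le_trans inf_le_right this)
  · push_neg at H1
    obtain ⟨i, hi, hne⟩ := H1
    have hif : h i = false := by cases hhi : h i <;> simp_all
    have h1 : (fun α => (⟨h α⟩ : ULift.{r} Bool)) i = ⊥ := by simp only [hif]; rfl
    have : u₁.inf (fun α => (⟨h α⟩ : ULift.{r} Bool)) ≤ ⊥ := h1 ▸ Finset.inf_le hi
    exact le_bot_iff.1 (le_trans inf_le_left this)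

/-- The trace of a `Bool`-valued hom on generators satisfying the relations lies in `clF F`. -/
lemma trace_mem_clF {I : Type*} (F : Set (I → Bool)) {B : Type*} [BooleanAlgebra B]
    {x : I → B} (hx : SatisfiesRelations F x) (φ : BoundedLatticeHom B Bool) :
    (fun i => φ (x i)) ∈ clF F := by
  classical
  intro u
  by_contra hcon
  push_neg at hcon
  set u₁ : Finset I := u.filter (fun i => φ (x i) = true) with hu₁
  set u₀ : Finset I := u.filter (fun i => φ (x i) = false) with hu₀
  have hno : ¬ ∃ f ∈ F, (∀ i ∈ u₀, f i = false) ∧ (∀ i ∈ u₁, f i = true) := by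
    rintro ⟨f, hf, h0, h1⟩
    obtain ⟨i, hi, hne⟩ := hcon f hf
    cases hφi : φ (x i)
    · exact hne ((h0 i (Finset.mem_filter.2 ⟨hi, hφi⟩)).trans hφi.symm)
    · exact hne ((h1 i (Finset.mem_filter.2 ⟨hi, hφi⟩)).trans hφi.symm)
  have hbot := hx u₀ u₁ hno
  have hφbot := congrArg φ hbot
  rw [map_inf, map_finset_inf, map_finset_inf, map_bot] at hφbot
  have h1 : u₁.inf (⇑φ ∘ x) = ⊤ := by
    refine le_antisymm le_top (Finset.le_inf fun i hi => ?_)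
    have hit := (Finset.mem_filter.1 hi).2
    simp only [Function.comp_apply, hit]
    exact le_rfl
  have h0 : u₀.inf (⇑φ ∘ fun α => (x α)ᶜ) = ⊤ := by
    refine le_antisymm le_top (Finset.le_inf fun i hi => ?_)
    have hif := (Finset.mem_filter.1 hi).2
    simp only [Function.comp_apply, map_compl', hif]
    exact le_rfl
  rw [h1, h0] at hφbot
  simp at hφbot

def IsHomFun {B : Type*} [BooleanAlgebra B] (f : B → Bool) : Prop :=
  f ⊤ = ⊤ ∧ f ⊥ = ⊥ ∧ (∀ a b, f (a ⊓ b) = f a ⊓ f b) ∧ (∀ a b, f (a ⊔ b) = f a ⊔ f b)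

def IsHomFun.toHom {B : Type*} [BooleanAlgebra B] {f : B → Bool} (hf : IsHomFun f) :
    BoundedLatticeHom B Bool :=
  ⟨⟨⟨f, hf.2.2.2⟩, hf.2.2.1⟩, hf.1, hf.2.1⟩

@[simp] lemma IsHomFun.toHom_apply {B : Type*} [BooleanAlgebra B] {f : B → Bool}
    (hf : IsHomFun f) (b : B) : hf.toHom b = f b := rfl

lemma isHomFun_coe {B : Type*} [BooleanAlgebra B] (φ : BoundedLatticeHom B Bool) :
    IsHomFun ⇑φ :=
  ⟨map_top φ, map_bot φ, fun a b => map_inf φ a b, fun a b => map_sup φ a b⟩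

lemma isClosed_setOf_isHomFun {B : Type*} [BooleanAlgebra B] :
    IsClosed {f : B → Bool | IsHomFun f} := by
  have heq : {f : B → Bool | IsHomFun f} =
      ({f : B → Bool | f ⊤ = ⊤} ∩ {f : B → Bool | f ⊥ = ⊥} ∩
        (⋂ (a : B) (b : B), {f : B → Bool | f (a ⊓ b) = f a ⊓ f b}) ∩
        (⋂ (a : B) (b : B), {f : B → Bool | f (a ⊔ b) = f a ⊔ f b})) := by
    ext f
    simp only [IsHomFun, Set.mem_setOf_eq, Set.mem_inter_iff, Set.mem_iInter]
    tauto
  rw [heq]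
  have hinf : ∀ (a b : B), Continuous (fun f : B → Bool => f a ⊓ f b) := fun a b => by
    have := (continuous_of_discreteTopology (f := fun p : Bool × Bool => p.1 ⊓ p.2)).comp
      ((continuous_apply (A := fun _ : B => Bool) a).prodMk (continuous_apply b))
    exact this
  have hsup : ∀ (a b : B), Continuous (fun f : B → Bool => f a ⊔ f b) := fun a b => by
    have := (continuous_of_discreteTopology (f := fun p : Bool × Bool => p.1 ⊔ p.2)).comp
      ((continuous_apply (A := fun _ : B => Bool) a).prodMk (continuous_apply b))
    exact this
  refine IsClosed.inter (IsClosed.inter (IsClosed.inter ?_ ?_) ?_) ?_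
  · exact isClosed_eq (continuous_apply ⊤) continuous_const
  · exact isClosed_eq (continuous_apply ⊥) continuous_const
  · exact isClosed_iInter fun a => isClosed_iInter fun b =>
      isClosed_eq (continuous_apply _) (hinf a b)
  · exact isClosed_iInter fun a => isClosed_iInter fun b =>
      isClosed_eq (continuous_apply _) (hsup a b)

/-- Finite determination: if `Bool`-valued homs are determined by their traces on the
generators, then the value at any `b` only depends on finitely many generator values. -/
lemma finite_determination {I : Type*} {B : Type*} [BooleanAlgebra B] (x : I → B)
    (huniq : ∀ φ ψ : BoundedLatticeHom B Bool, (∀ i, φ (x i) = ψ (x i)) → φ = ψ) (b : B) :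
    ∃ u : Finset I, ∀ φ ψ : BoundedLatticeHom B Bool,
      (∀ i ∈ u, φ (x i) = ψ (x i)) → φ b = ψ b := by
  classical
  by_contra hcon
  push_neg at hcon
  set T : Finset I → Set ((B → Bool) × (B → Bool)) := fun u =>
    {p | IsHomFun p.1 ∧ IsHomFun p.2 ∧ (∀ i ∈ u, p.1 (x i) = p.2 (x i)) ∧
      p.1 b = true ∧ p.2 b = false} with hT
  have hTmono : ∀ {s t : Finset I}, s ⊆ t → T t ⊆ T s := by
    intro s t hst p hp
    exact ⟨hp.1, hp.2.1, fun i hi => hp.2.2.1 i (hst hi), hp.2.2.2⟩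
  have hT_ne : ∀ u, (T u).Nonempty := by
    intro u
    obtain ⟨φ, ψ, hagree, hne⟩ := hcon u
    cases hφ : φ b <;> cases hψ : ψ b
    · exact absurd (hφ.trans hψ.symm) hne
    · exact ⟨(⇑ψ, ⇑φ), isHomFun_coe ψ, isHomFun_coe φ,
        fun i hi => (hagree i hi).symm, hψ, hφ⟩
    · exact ⟨(⇑φ, ⇑ψ), isHomFun_coe φ, isHomFun_coe ψ, hagree, hφ, hψ⟩
    · exact absurd (hφ.trans hψ.symm) hne
  have hT_closed : ∀ u, IsClosed (T u) := by
    intro u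
    have heq : T u =
        (Prod.fst ⁻¹' {f : B → Bool | IsHomFun f}) ∩
        (Prod.snd ⁻¹' {f : B → Bool | IsHomFun f}) ∩
        (⋂ i ∈ u, {p : (B → Bool) × (B → Bool) | p.1 (x i) = p.2 (x i)}) ∩
        {p : (B → Bool) × (B → Bool) | p.1 b = true} ∩
        {p : (B → Bool) × (B → Bool) | p.2 b = false} := by
      ext p
      simp only [hT, Set.mem_setOf_eq, Set.mem_inter_iff, Set.mem_preimage, Set.mem_iInter]
      tauto
    rw [heq]
    exact ((((isClosed_setOf_isHomFun.preimage continuous_fst).inter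
      (isClosed_setOf_isHomFun.preimage continuous_snd)).inter
      (isClosed_biInter fun i _ => isClosed_eq
        ((continuous_apply (x i)).comp continuous_fst)
        ((continuous_apply (x i)).comp continuous_snd))).inter
      (isClosed_eq ((continuous_apply b).comp continuous_fst) continuous_const)).inter
      (isClosed_eq ((continuous_apply b).comp continuous_snd) continuous_const)
  have hdir : Directed (· ⊇ ·) T := fun s t =>
    ⟨s ∪ t, hTmono Finset.subset_union_left, hTmono Finset.subset_union_right⟩
  obtain ⟨p, hp⟩ := IsCompact.nonempty_iInter_of_directed_nonempty_isCompact_isClosed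
    T hdir hT_ne (fun u => (hT_closed u).isCompact) hT_closed
  simp only [Set.mem_iInter] at hp
  obtain ⟨h1, h2, -, hb1, hb2⟩ := hp (∅ : Finset I)
  have hagree : ∀ i, h1.toHom (x i) = h2.toHom (x i) := fun i =>
    (hp {i}).2.2.1 i (Finset.mem_singleton_self i)
  have hfb := congrFun (congrArg (fun φ : BoundedLatticeHom B Bool => (φ : B → Bool))
    (huniq h1.toHom h2.toHom hagree)) b
  simp only [IsHomFun.toHom_apply] at hfb
  rw [hb1, hb2] at hfb
  exact Bool.noConfusion hfb

/-- Every element of `clF F` extends to an element of `clF Fstar`. -/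
lemma clF_extend {W : Type*} {w : Set W} {F : Set (↥w → Bool)} {Fstar : Set (W → Bool)}
    (hext : ∀ f ∈ F, ∃ g ∈ Fstar, ∀ α : ↥w, g ↑α = f α)
    {h : ↥w → Bool} (hh : h ∈ clF F) :
    ∃ hs : W → Bool, (∀ α : ↥w, hs ↑α = h α) ∧ hs ∈ clF Fstar := by
  classical
  set A : Finset W → Set (W → Bool) := fun v =>
    {k | (∀ α : ↥w, (↑α : W) ∈ v → k ↑α = h α) ∧ ∃ g ∈ Fstar, ∀ β ∈ v, g β = k β} with hA
  have hAmono : ∀ {s t : Finset W}, s ⊆ t → A t ⊆ A s := by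
    intro s t hst k hk
    refine ⟨fun α hα => hk.1 α (hst hα), ?_⟩
    obtain ⟨g, hg, hgk⟩ := hk.2
    exact ⟨g, hg, fun β hβ => hgk β (hst hβ)⟩
  have hA_ne : ∀ v, (A v).Nonempty := by
    intro v
    obtain ⟨f, hf, hfh⟩ := hh (v.subtype (· ∈ w))
    obtain ⟨g, hg, hgf⟩ := hext f hf
    refine ⟨g, fun α hα => ?_, ⟨g, hg, fun β _ => rfl⟩⟩
    rw [hgf α]
    exact hfh α (Finset.mem_subtype.2 hα)
  have hA_closed : ∀ v, IsClosed (A v) := by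
    intro v
    have heq : A v =
        (⋂ (α : ↥w) (_ : (↑α : W) ∈ v), {k : W → Bool | k ↑α = h α}) ∩
        ((fun k : W → Bool => fun β : {b // b ∈ v} => k ↑β) ⁻¹'
          {q : {b // b ∈ v} → Bool | ∃ g ∈ Fstar, ∀ β : {b // b ∈ v}, g ↑β = q β}) := by
      ext k
      simp only [hA, Set.mem_setOf_eq, Set.mem_inter_iff, Set.mem_iInter, Set.mem_preimage]
      constructor
      · rintro ⟨h1, g, hg, hgk⟩
        exact ⟨h1, g, hg, fun β => hgk ↑β β.2⟩
      · rintro ⟨h1, g, hg, hgk⟩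
        exact ⟨h1, g, hg, fun β hβ => hgk ⟨β, hβ⟩⟩
    rw [heq]
    refine IsClosed.inter
      (isClosed_iInter fun α => isClosed_iInter fun _ =>
        isClosed_eq (continuous_apply _) continuous_const) ?_
    exact IsClosed.preimage (continuous_pi fun β => continuous_apply _) (isClosed_discrete _)
  have hdir : Directed (· ⊇ ·) A := fun s t =>
    ⟨s ∪ t, hAmono Finset.subset_union_left, hAmono Finset.subset_union_right⟩
  obtain ⟨k, hk⟩ := IsCompact.nonempty_iInter_of_directed_nonempty_isCompact_isClosed
    A hdir hA_ne (fun v => (hA_closed v).isCompact) hA_closed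
  simp only [Set.mem_iInter] at hk
  exact ⟨k, fun α => (hk {↑α}).1 α (Finset.mem_singleton_self _), fun v => (hk v).2⟩

end
end BwFAux

/-- If `w ⊆ w*`, every `f ∈ F` extends to some `g ∈ F*`, and every `g ∈ F*` restricts into
`cl(F)`, then `B_{(w,F)}` embeds into `B_{(w*,F*)}` via the map sending generators to the
corresponding generators. -/
theorem subalgebra_of_extension {W : Type u} (w : Set W)
    (F : Set (↥w → Bool)) (Fstar : Set (W → Bool))
    (B : Type v) [BooleanAlgebra B] (x : ↥w → B)
    (Bstar : Type v') [BooleanAlgebra Bstar] (xstar : W → Bstar)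
    (hB : IsBwF.{u, v, w'} F B x)
    (hBstar : IsBwF.{u, v', w'} Fstar Bstar xstar)
    (hext : ∀ f ∈ F, ∃ g ∈ Fstar, ∀ α : ↥w, g ↑α = f α)
    (hcl : ∀ g ∈ Fstar, (fun α : ↥w => g ↑α) ∈ clF F) :
    ∃ e : BoundedLatticeHom B Bstar, Function.Injective e ∧
      ∀ α : ↥w, e (x α) = xstar ↑α := by
  classical
  -- uniqueness of Bool-valued homs given their traces on generators
  have hBuniq : ∀ φ ψ : BoundedLatticeHom B Bool, (∀ α, φ (x α) = ψ (x α)) → φ = ψ := by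
    intro φ ψ hagree
    have htr : (fun α => φ (x α)) ∈ clF F := BwFAux.trace_mem_clF F hB.1 φ
    obtain ⟨g, hg, hguniq⟩ := hB.2 (ULift.{w'} Bool) (fun α => ⟨φ (x α)⟩)
      (BwFAux.satisfiesRelations_of_mem_clF F htr)
    have h1 : BwFAux.upHom.comp φ = g := hguniq _ (fun α => rfl)
    have h2 : BwFAux.upHom.comp ψ = g := hguniq _ (fun α => by
      show (⟨ψ (x α)⟩ : ULift.{w'} Bool) = ⟨φ (x α)⟩
      rw [hagree α])
    ext b
    have h3 := congrFun (congrArg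
      (fun t : BoundedLatticeHom B (ULift.{w'} Bool) => (t : B → ULift.{w'} Bool))
      (h1.trans h2.symm)) b
    exact congrArg ULift.down h3
  -- existence of Bool-valued homs with prescribed traces in clF
  have hBex : ∀ h : ↥w → Bool, h ∈ clF F →
      ∃ φ : BoundedLatticeHom B Bool, ∀ α, φ (x α) = h α := by
    intro h hh
    obtain ⟨g, hg, -⟩ := hB.2 (ULift.{w'} Bool) (fun α => ⟨h α⟩)
      (BwFAux.satisfiesRelations_of_mem_clF F hh)
    exact ⟨BwFAux.downHom.comp g, fun α => by
      show (g (x α)).down = h α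
      rw [hg α]⟩
  have hBsex : ∀ h : W → Bool, h ∈ clF Fstar →
      ∃ ψ : BoundedLatticeHom Bstar Bool, ∀ β, ψ (xstar β) = h β := by
    intro h hh
    obtain ⟨g, hg, -⟩ := hBstar.2 (ULift.{w'} Bool) (fun β => ⟨h β⟩)
      (BwFAux.satisfiesRelations_of_mem_clF Fstar hh)
    exact ⟨BwFAux.downHom.comp g, fun β => by
      show (g (xstar β)).down = h β
      rw [hg β]⟩
  -- restriction of a clF Fstar pattern lies in clF F
  have hrestrict : ∀ hs : W → Bool, hs ∈ clF Fstar → (fun α : ↥w => hs ↑α) ∈ clF F := by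
    intro hs hhs u
    obtain ⟨g, hg, hgk⟩ := hhs (u.image (fun α : ↥w => (↑α : W)))
    obtain ⟨f, hf, hfg⟩ := hcl g hg u
    refine ⟨f, hf, fun α hα => ?_⟩
    have h1 : f α = g ↑α := hfg α hα
    have h2 : g ↑α = hs ↑α := hgk ↑α (Finset.mem_image_of_mem _ hα)
    exact h1.trans h2
  -- pairings between Bool-valued homs of B and Bstar
  have pair_of_ψ : ∀ ψ : BoundedLatticeHom Bstar Bool,
      ∃ φ : BoundedLatticeHom B Bool, ∀ α : ↥w, φ (x α) = ψ (xstar ↑α) := fun ψ =>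
    hBex _ (hrestrict _ (BwFAux.trace_mem_clF Fstar hBstar.1 ψ))
  have pair_of_φ : ∀ φ : BoundedLatticeHom B Bool,
      ∃ ψ : BoundedLatticeHom Bstar Bool, ∀ α : ↥w, φ (x α) = ψ (xstar ↑α) := by
    intro φ
    obtain ⟨hs, hres, hmem⟩ := BwFAux.clF_extend hext (BwFAux.trace_mem_clF F hB.1 φ)
    obtain ⟨ψ, hψ⟩ := hBsex hs hmem
    exact ⟨ψ, fun α => by rw [hψ ↑α, hres α]⟩
  -- elements of Bstar are separated by Bool-valued homs
  have unique_c : ∀ c c' : Bstar, (∀ ψ : BoundedLatticeHom Bstar Bool, ψ c = ψ c') → c = c' := by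
    intro c c' hcc
    by_contra hne
    obtain ⟨ψ, hψ⟩ := BwFAux.exists_boolHom_ne hne
    exact hψ (hcc ψ)
  -- the defining property of the embedding
  set P : B → Bstar → Prop := fun b c =>
    ∀ (ψ : BoundedLatticeHom Bstar Bool) (φ : BoundedLatticeHom B Bool),
      (∀ α : ↥w, φ (x α) = ψ (xstar ↑α)) → ψ c = φ b with hP
  have exists_c : ∀ b : B, ∃ c : Bstar, P b c := by
    intro b
    obtain ⟨u, hu⟩ := BwFAux.finite_determination x hBuniq b
    set good : Finset ↥w → Prop := fun s =>
      ∃ φ : BoundedLatticeHom B Bool, (∀ α ∈ u, (φ (x α) = true ↔ α ∈ s)) ∧ φ b = true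
      with hgood
    set t : Finset ↥w → Bstar :=
      fun s => u.inf (fun α => if α ∈ s then xstar ↑α else (xstar ↑α)ᶜ) with ht
    refine ⟨(u.powerset.filter good).sup t, ?_⟩
    intro ψ φ hpair
    have hentry : ∀ (c : Prop) [Decidable c] (bb : Bool),
        ((if c then bb else bbᶜ) = ⊤) ↔ (bb = true ↔ c) := by
      intro c hc bb
      by_cases h : c <;> cases bb <;> simp [h]
    have hψt : ∀ s : Finset ↥w,
        ψ (t s) = ⊤ ↔ (∀ α ∈ u, (φ (x α) = true ↔ α ∈ s)) := by
      intro s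
      have hts : ψ (t s) = u.inf (fun α => if α ∈ s then φ (x α) else (φ (x α))ᶜ) := by
        rw [ht, map_finset_inf]
        refine Finset.inf_congr rfl (fun α hα => ?_)
        simp only [Function.comp_apply, apply_ite ψ, map_compl', hpair α]
      rw [hts, Finset.inf_eq_top_iff]
      constructor
      · intro hall α hα
        exact (hentry _ _).1 (hall α hα)
      · intro hall α hα
        exact (hentry _ _).2 (hall α hα)
    cases hb : φ b
    · -- φ b = false : show ψ of the sup is false
      have : ψ ((u.powerset.filter good).sup t) ≤ ⊥ := by
        rw [map_finset_sup]
        refine Finset.sup_le (fun s hs => ?_)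
        obtain ⟨φ', hφ', hφ'b⟩ := (Finset.mem_filter.1 hs).2
        cases hψts : ψ (t s)
        · exact le_of_eq hψts
        · exfalso
          have hmatch := (hψt s).1 hψts
          have hagree : ∀ α ∈ u, φ (x α) = φ' (x α) := by
            intro α hα
            have hiff : (φ (x α) = true) ↔ (φ' (x α) = true) :=
              (hmatch α hα).trans (hφ' α hα).symm
            cases hφα : φ (x α) <;> cases hφ'α : φ' (x α)
            · rfl
            · rw [hφα, hφ'α] at hiff
              exact absurd (hiff.2 rfl) Bool.false_ne_true
            · rw [hφα, hφ'α] at hiff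
              exact absurd (hiff.1 rfl) Bool.false_ne_true
            · rfl
          have := hu φ φ' hagree
          rw [hb, hφ'b] at this
          exact Bool.noConfusion this
      have hbot : ψ ((u.powerset.filter good).sup t) = false := le_bot_iff.1 this
      rw [hbot]
    · -- φ b = true
      set s₀ : Finset ↥w := u.filter (fun α => φ (x α) = true) with hs₀
      have hmem : s₀ ∈ u.powerset.filter good := by
        refine Finset.mem_filter.2 ⟨Finset.mem_powerset.2 (Finset.filter_subset _ _), ?_⟩
        exact ⟨φ, fun α hα => by
          constructor
          · intro hφα; exact Finset.mem_filter.2 ⟨hα, hφα⟩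
          · intro hαs; exact (Finset.mem_filter.1 hαs).2, hb⟩
      have h1 : ψ (t s₀) = ⊤ := (hψt s₀).2 (fun α hα => by
        constructor
        · intro hφα; exact Finset.mem_filter.2 ⟨hα, hφα⟩
        · intro hαs; exact (Finset.mem_filter.1 hαs).2)
      have h2 : (⊤ : Bool) ≤ ψ ((u.powerset.filter good).sup t) := by
        rw [map_finset_sup]
        exact le_trans (le_of_eq h1.symm) (Finset.le_sup (f := ⇑ψ ∘ t) hmem)
      exact top_le_iff.1 h2
  choose e₀ he₀ using exists_c
  have heq_of_P : ∀ {bb : B} {c : Bstar}, P bb c → e₀ bb = c := by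
    intro bb c hc
    apply unique_c
    intro ψ
    obtain ⟨φ, hφ⟩ := pair_of_ψ ψ
    rw [he₀ bb ψ φ hφ, hc ψ φ hφ]
  refine ⟨⟨⟨⟨e₀, fun b b' => ?_⟩, fun b b' => ?_⟩, ?_, ?_⟩, ?_, ?_⟩
  · -- sup
    refine heq_of_P (fun ψ φ hpair => ?_)
    rw [map_sup, map_sup, he₀ b ψ φ hpair, he₀ b' ψ φ hpair]
  · -- inf
    refine heq_of_P (fun ψ φ hpair => ?_)
    rw [map_inf, map_inf, he₀ b ψ φ hpair, he₀ b' ψ φ hpair]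
  · -- top
    refine heq_of_P (fun ψ φ hpair => ?_)
    rw [map_top, map_top]
  · -- bot
    refine heq_of_P (fun ψ φ hpair => ?_)
    rw [map_bot, map_bot]
  · -- injective
    intro b b' hbb
    by_contra hne
    obtain ⟨φ, hφ⟩ := BwFAux.exists_boolHom_ne hne
    obtain ⟨ψ, hψ⟩ := pair_of_φ φ
    have h1 : ψ (e₀ b) = φ b := he₀ b ψ φ hψ
    have h2 : ψ (e₀ b') = φ b' := he₀ b' ψ φ hψ
    have : e₀ b = e₀ b' := hbb
    rw [this, h2] at h1
    exact hφ h1.symm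
  · -- generators
    intro α
    refine heq_of_P (fun ψ φ hpair => (hpair α).symm)
end

section
/- If a Boolean algebra B is generated by ⟨x_ξ : ξ < χ⟩ and contains an ideal-independent sequence of length κ, then it contains an ideal-independent sequence of length κ whose terms are elementary meets, i.e., each term has the form a_α = ⋀_{k<k_α} x_{ξ(α,k)}^{t(α,k)} where the indices ξ(α,k) < χ are pairwise distinct (for fixed α) and t(α,k) ∈ {0,1}, with x⁰ = x and x¹ = −x. -/
universe u

/-- `a` is an ideal-independent sequence of length `κ` in the Boolean algebra `B`. -/
def IdealIndependent {B : Type u} [BooleanAlgebra B] (κ : Ordinal) (a : Ordinal → B) : Prop :=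
  ∀ ξ < κ, ∀ w : Finset Ordinal, (∀ ζ ∈ w, ζ < κ ∧ ζ ≠ ξ) → ¬ a ξ ≤ w.sup a

/-- The elements of the subalgebra generated by `s`. -/
inductive GenBy {B : Type u} [BooleanAlgebra B] (s : Set B) : B → Prop
  | base : ∀ b ∈ s, GenBy s b
  | bot : GenBy s ⊥
  | top : GenBy s ⊤
  | inf : ∀ a b, GenBy s a → GenBy s b → GenBy s (a ⊓ b)
  | sup : ∀ a b, GenBy s a → GenBy s b → GenBy s (a ⊔ b)
  | compl : ∀ a, GenBy s a → GenBy s aᶜ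

section Aux

variable {B : Type u} [BooleanAlgebra B]

/-- A literal. -/
def EMlit (x : Ordinal → B) (t : Ordinal → Bool) (ξ : Ordinal) : B :=
  if t ξ = true then (x ξ)ᶜ else x ξ

/-- An elementary meet described by a pair (support, sign function). -/
def EMcell (x : Ordinal → B) (p : Finset Ordinal × (Ordinal → Bool)) : B :=
  p.1.inf (EMlit x p.2)

/-- `b` is a finite join of elementary meets with indices below `χ`. -/
def DNF (χ : Ordinal) (x : Ordinal → B) (b : B) : Prop :=
  ∃ L : List (Finset Ordinal × (Ordinal → Bool)),
    (∀ p ∈ L, ∀ ξ ∈ p.1, ξ < χ) ∧ b = (L.map (EMcell x)).foldr (· ⊔ ·) ⊥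

lemma foldr_sup_le_iff {c : B} : ∀ L : List B, L.foldr (· ⊔ ·) ⊥ ≤ c ↔ ∀ b ∈ L, b ≤ c := by
  intro L; induction L with
  | nil => simp
  | cons hd tl ih => simp [sup_le_iff, ih]

lemma le_foldr_sup {b : B} : ∀ L : List B, b ∈ L → b ≤ L.foldr (· ⊔ ·) ⊥ := by
  intro L; induction L with
  | nil => simp
  | cons hd tl ih =>
    intro h
    rcases List.mem_cons.mp h with h | h
    · simp [h]
    · exact le_sup_of_le_right (ih h)

lemma foldr_sup_append (L₁ L₂ : List B) :
    (L₁ ++ L₂).foldr (· ⊔ ·) ⊥ = L₁.foldr (· ⊔ ·) ⊥ ⊔ L₂.foldr (· ⊔ ·) ⊥ := by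
  induction L₁ with
  | nil => simp
  | cons hd tl ih => simp [ih, sup_assoc]

lemma dnf_bot {χ : Ordinal} {x : Ordinal → B} : DNF χ x (⊥ : B) :=
  ⟨[], by simp, by simp⟩

lemma dnf_top {χ : Ordinal} {x : Ordinal → B} : DNF χ x (⊤ : B) :=
  ⟨[(∅, fun _ => false)], by simp, by simp [EMcell]⟩

lemma dnf_base {χ : Ordinal} {x : Ordinal → B} {ξ : Ordinal} (hξ : ξ < χ) :
    DNF χ x (x ξ) := by
  refine ⟨[({ξ}, fun _ => false)], ?_, ?_⟩
  · intro p hp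
    simp only [List.mem_singleton] at hp
    subst hp
    intro ζ hζ
    simp only [Finset.mem_singleton] at hζ
    exact hζ ▸ hξ
  · simp [EMcell, EMlit]

lemma dnf_sup {χ : Ordinal} {x : Ordinal → B} {b c : B}
    (hb : DNF χ x b) (hc : DNF χ x c) : DNF χ x (b ⊔ c) := by
  obtain ⟨L₁, h₁, e₁⟩ := hb
  obtain ⟨L₂, h₂, e₂⟩ := hc
  refine ⟨L₁ ++ L₂, ?_, ?_⟩
  · intro p hp; rcases List.mem_append.mp hp with h | h
    · exact h₁ p h
    · exact h₂ p h
  · rw [List.map_append, foldr_sup_append, e₁, e₂]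

lemma dnf_cell_inf_cell {χ : Ordinal} {x : Ordinal → B}
    {s s' : Finset Ordinal} {t t' : Ordinal → Bool}
    (hs : ∀ ξ ∈ s, ξ < χ) (hs' : ∀ ξ ∈ s', ξ < χ) :
    DNF χ x (EMcell x (s, t) ⊓ EMcell x (s', t')) := by
  classical
  by_cases h : ∀ ξ ∈ s, ξ ∈ s' → t ξ = t' ξ
  · refine ⟨[(s ∪ s', fun ξ => if ξ ∈ s then t ξ else t' ξ)], ?_, ?_⟩
    · intro p hp
      simp only [List.mem_singleton] at hp
      subst hp
      intro ξ hξ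
      rcases Finset.mem_union.mp hξ with h' | h'
      · exact hs ξ h'
      · exact hs' ξ h'
    · simp only [List.map_cons, List.map_nil, List.foldr_cons, List.foldr_nil, sup_bot_eq]
      show EMcell x (s, t) ⊓ EMcell x (s', t')
        = EMcell x (s ∪ s', fun ξ => if ξ ∈ s then t ξ else t' ξ)
      unfold EMcell
      simp only [Finset.inf_union]
      congr 1
      · apply Finset.inf_congr rfl
        intro ξ hξ
        simp [EMlit, hξ]
      · apply Finset.inf_congr rfl
        intro ξ hξ
        by_cases hξs : ξ ∈ s
        · simp [EMlit, hξs, h ξ hξs hξ]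
        · simp [EMlit, hξs]
  · push_neg at h
    obtain ⟨ξ, hξs, hξs', hne⟩ := h
    refine ⟨[], by simp, ?_⟩
    simp only [List.map_nil, List.foldr_nil]
    apply le_antisymm _ bot_le
    have h1 : EMcell x (s, t) ≤ EMlit x t ξ := Finset.inf_le hξs
    have h2 : EMcell x (s', t') ≤ EMlit x t' ξ := Finset.inf_le hξs'
    have h3 : EMlit x t ξ ⊓ EMlit x t' ξ = ⊥ := by
      rcases Bool.eq_false_or_eq_true (t ξ) with h4 | h4 <;>
        rcases Bool.eq_false_or_eq_true (t' ξ) with h5 | h5 <;>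
          simp_all [EMlit]
    calc EMcell x (s, t) ⊓ EMcell x (s', t')
        ≤ EMlit x t ξ ⊓ EMlit x t' ξ := inf_le_inf h1 h2
      _ = ⊥ := h3

lemma dnf_cell_inf {χ : Ordinal} {x : Ordinal → B}
    {s : Finset Ordinal} {t : Ordinal → Bool} (hs : ∀ ξ ∈ s, ξ < χ)
    {c : B} (hc : DNF χ x c) : DNF χ x (EMcell x (s, t) ⊓ c) := by
  obtain ⟨L, hL, e⟩ := hc
  subst e
  induction L with
  | nil => simpa using dnf_bot
  | cons hd tl ih =>
    simp only [List.map_cons, List.foldr_cons]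
    rw [inf_sup_left]
    refine dnf_sup ?_ (ih fun p hp => hL p (List.mem_cons_of_mem _ hp))
    have := dnf_cell_inf_cell (x := x) (s := s) (t := t) (s' := hd.1) (t' := hd.2)
      hs (hL hd (List.mem_cons_self))
    simpa [EMcell] using this

lemma dnf_inf {χ : Ordinal} {x : Ordinal → B} {b c : B}
    (hb : DNF χ x b) (hc : DNF χ x c) : DNF χ x (b ⊓ c) := by
  obtain ⟨L, hL, e⟩ := hb
  subst e
  induction L with
  | nil => simpa using dnf_bot
  | cons hd tl ih =>
    simp only [List.map_cons, List.foldr_cons]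
    rw [inf_sup_right]
    refine dnf_sup ?_ (ih fun p hp => hL p (List.mem_cons_of_mem _ hp))
    have := dnf_cell_inf (x := x) (s := hd.1) (t := hd.2)
      (hL hd (List.mem_cons_self)) hc
    simpa [EMcell] using this

lemma foldr_sup_toList (s : Finset Ordinal) (f : Ordinal → B) :
    ((s.toList.map f).foldr (· ⊔ ·) ⊥) = s.sup f := by
  apply le_antisymm
  · rw [foldr_sup_le_iff]
    intro b hb
    obtain ⟨ξ, hξ, rfl⟩ := List.mem_map.mp hb
    exact Finset.le_sup (Finset.mem_toList.mp hξ)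
  · apply Finset.sup_le
    intro ξ hξ
    exact le_foldr_sup _ (List.mem_map.mpr ⟨ξ, Finset.mem_toList.mpr hξ, rfl⟩)

lemma dnf_compl_cell {χ : Ordinal} {x : Ordinal → B}
    {s : Finset Ordinal} {t : Ordinal → Bool} (hs : ∀ ξ ∈ s, ξ < χ) :
    DNF χ x (EMcell x (s, t))ᶜ := by
  classical
  refine ⟨s.toList.map (fun ξ => ({ξ}, fun _ => !(t ξ))), ?_, ?_⟩
  · intro p hp
    obtain ⟨ξ, hξ, rfl⟩ := List.mem_map.mp hp
    intro ζ hζ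
    simp only [Finset.mem_singleton] at hζ
    exact hζ ▸ hs ξ (Finset.mem_toList.mp hξ)
  · have : (EMcell x (s, t))ᶜ = s.sup (fun ξ => (EMlit x t ξ)ᶜ) := by
      unfold EMcell
      exact Finset.compl_inf s _
    rw [this, List.map_map]
    rw [show ((EMcell x) ∘ fun ξ => (({ξ} : Finset Ordinal), fun _ => !(t ξ)))
        = fun ξ => (EMlit x t ξ)ᶜ from ?_]
    · exact (foldr_sup_toList s _).symm
    · funext ξ
      rcases Bool.eq_false_or_eq_true (t ξ) with h | h <;>
        simp [EMcell, EMlit, h]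

lemma dnf_compl {χ : Ordinal} {x : Ordinal → B} {b : B}
    (hb : DNF χ x b) : DNF χ x bᶜ := by
  obtain ⟨L, hL, e⟩ := hb
  subst e
  induction L with
  | nil => simpa using dnf_top
  | cons hd tl ih =>
    simp only [List.map_cons, List.foldr_cons, compl_sup]
    refine dnf_inf ?_ (ih fun p hp => hL p (List.mem_cons_of_mem _ hp))
    exact dnf_compl_cell (hL hd (List.mem_cons_self))

lemma dnf_of_genBy {χ : Ordinal} {x : Ordinal → B} {b : B}
    (h : GenBy {y | ∃ ξ < χ, y = x ξ} b) : DNF χ x b := by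
  induction h with
  | base b hb => obtain ⟨ξ, hξ, rfl⟩ := hb; exact dnf_base hξ
  | bot => exact dnf_bot
  | top => exact dnf_top
  | inf a b _ _ iha ihb => exact dnf_inf iha ihb
  | sup a b _ _ iha ihb => exact dnf_sup iha ihb
  | compl a _ iha => exact dnf_compl iha

end Aux

/-- If `B` is generated by `⟨x_ξ : ξ < χ⟩` and has an ideal-independent sequence of
length `κ`, then it has an ideal-independent sequence of length `κ` whose terms are
elementary meets `⋀_{k} x_{ξ(α,k)}^{t(α,k)}` with pairwise distinct indices `ξ(α,k) < χ`
(here `x⁰ = x`, `x¹ = −x`). -/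
theorem idealIndependent_of_elementary_meets
    {B : Type u} [BooleanAlgebra B] (χ κ : Ordinal) (x : Ordinal → B)
    (hgen : ∀ b : B, GenBy {y | ∃ ξ < χ, y = x ξ} b)
    (a : Ordinal → B) (hii : IdealIndependent κ a) :
    ∃ a' : Ordinal → B, IdealIndependent κ a' ∧
      ∀ α < κ, ∃ (s : Finset Ordinal) (t : Ordinal → Bool),
        (∀ ξ ∈ s, ξ < χ) ∧
        a' α = s.inf (fun ξ => if t ξ = true then (x ξ)ᶜ else x ξ) := by
  classical
  -- key selection: for each `α < κ`, an elementary meet below `a α` not dominated by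
  -- any admissible finite join of the original sequence
  have key : ∀ α, α < κ → ∃ m : B,
      (∃ (s : Finset Ordinal) (t : Ordinal → Bool), (∀ ξ ∈ s, ξ < χ) ∧
        m = s.inf (fun ξ => if t ξ = true then (x ξ)ᶜ else x ξ)) ∧
      (∀ w : Finset Ordinal, (∀ ζ ∈ w, ζ < κ ∧ ζ ≠ α) → ¬ m ≤ w.sup a) := by
    intro α hα
    obtain ⟨L, hL, he⟩ := dnf_of_genBy (hgen (a α))
    by_contra hcon
    push_neg at hcon
    -- every cell of the DNF of `a α` is dominated by some admissible join
    have hcc : ∀ p ∈ L, ∃ w : Finset Ordinal,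
        (∀ ζ ∈ w, ζ < κ ∧ ζ ≠ α) ∧ EMcell x p ≤ w.sup a := by
      intro p hp
      obtain ⟨w, hw, hle⟩ := hcon (EMcell x p)
        ⟨p.1, p.2, hL p hp, by
          unfold EMcell EMlit
          rfl⟩
      exact ⟨w, hw, hle⟩
    -- collect a single admissible finite set dominating all cells
    set W : Finset Ordinal :=
      L.toFinset.attach.biUnion
        (fun p => Classical.choose (hcc p.1 (List.mem_toFinset.mp p.2))) with hW
    have hWadm : ∀ ζ ∈ W, ζ < κ ∧ ζ ≠ α := by
      intro ζ hζ
      obtain ⟨p, _, hmem⟩ := Finset.mem_biUnion.mp hζ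
      exact (Classical.choose_spec (hcc p.1 (List.mem_toFinset.mp p.2))).1 ζ hmem
    have hall : a α ≤ W.sup a := by
      rw [he, foldr_sup_le_iff]
      intro b hb
      obtain ⟨p, hp, rfl⟩ := List.mem_map.mp hb
      have hp' : p ∈ L.toFinset := List.mem_toFinset.mpr hp
      have hsub : Classical.choose (hcc p hp) ⊆ W := by
        intro ζ hζ
        apply Finset.mem_biUnion.mpr
        exact ⟨⟨p, hp'⟩, Finset.mem_attach _ _, by
          convert hζ using 2⟩
      exact le_trans (Classical.choose_spec (hcc p hp)).2 (Finset.sup_mono hsub)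
    exact hii α hα W hWadm hall
  -- also remember each chosen meet is below the corresponding `a α`
  have key' : ∀ α, α < κ → ∃ m : B,
      (∃ (s : Finset Ordinal) (t : Ordinal → Bool), (∀ ξ ∈ s, ξ < χ) ∧
        m = s.inf (fun ξ => if t ξ = true then (x ξ)ᶜ else x ξ)) ∧
      m ≤ a α ∧
      (∀ w : Finset Ordinal, (∀ ζ ∈ w, ζ < κ ∧ ζ ≠ α) → ¬ m ≤ w.sup a) := by
    intro α hα
    obtain ⟨L, hL, he⟩ := dnf_of_genBy (hgen (a α))
    by_contra hcon
    push_neg at hcon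
    have hcc : ∀ p ∈ L, ∃ w : Finset Ordinal,
        (∀ ζ ∈ w, ζ < κ ∧ ζ ≠ α) ∧ EMcell x p ≤ w.sup a := by
      intro p hp
      have hmle : EMcell x p ≤ a α := by
        rw [he]
        exact le_foldr_sup _ (List.mem_map.mpr ⟨p, hp, rfl⟩)
      obtain ⟨w, hw, hle⟩ := hcon (EMcell x p)
        ⟨p.1, p.2, hL p hp, by unfold EMcell EMlit; rfl⟩ hmle
      exact ⟨w, hw, hle⟩
    set W : Finset Ordinal :=
      L.toFinset.attach.biUnion
        (fun p => Classical.choose (hcc p.1 (List.mem_toFinset.mp p.2))) with hW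
    have hWadm : ∀ ζ ∈ W, ζ < κ ∧ ζ ≠ α := by
      intro ζ hζ
      obtain ⟨p, _, hmem⟩ := Finset.mem_biUnion.mp hζ
      exact (Classical.choose_spec (hcc p.1 (List.mem_toFinset.mp p.2))).1 ζ hmem
    have hall : a α ≤ W.sup a := by
      rw [he, foldr_sup_le_iff]
      intro b hb
      obtain ⟨p, hp, rfl⟩ := List.mem_map.mp hb
      have hp' : p ∈ L.toFinset := List.mem_toFinset.mpr hp
      have hsub : Classical.choose (hcc p hp) ⊆ W := by
        intro ζ hζ
        apply Finset.mem_biUnion.mpr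
        exact ⟨⟨p, hp'⟩, Finset.mem_attach _ _, by convert hζ using 2⟩
      exact le_trans (Classical.choose_spec (hcc p hp)).2 (Finset.sup_mono hsub)
    exact hii α hα W hWadm hall
  -- define the new sequence
  refine ⟨fun α => if h : α < κ then Classical.choose (key' α h) else ⊥, ?_, ?_⟩
  · intro ξ hξ w hw hle
    have hspec := Classical.choose_spec (key' ξ hξ)
    apply hspec.2.2 w hw
    refine le_trans ?_ (le_trans hle ?_)
    · simp [hξ]
    · apply Finset.sup_mono_fun
      intro ζ hζ
      have hζκ := (hw ζ hζ).1
      simp only [hζκ, dif_pos]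
      exact (Classical.choose_spec (key' ζ hζκ)).2.1
  · intro α hα
    have hspec := Classical.choose_spec (key' α hα)
    obtain ⟨s, t, hst, he⟩ := hspec.1
    exact ⟨s, t, hst, by simp only [hα, dif_pos]; exact he⟩
end

section
/- Let B be a Boolean algebra with Stone space Ult(B), let λ be singular, and suppose s(B) < χ₀ where ⟨χ_i : i < cf(λ)⟩ is increasing with supremum λ. Let ⟨x_ξ : ξ < χ_i⁺⟩ be a right-separated sequence of points of a closed set Y ⊆ Ult(B), witnessed by b_ξ ∈ B with x_ξ ∈ b_ξ and x_ζ ∉ b_ξ for ξ < ζ. Then the set Z = {ξ < χ_i⁺ : cf(ξ) = χ_i and there is a ∈ B with x_ξ ∈ a and Φ(a ∩ Y) < χ_i} is not stationary in χ_i⁺, where Φ(W) denotes the supremum of lengths of right-separated sequences inside W, and s(B) denotes the spread of B (the supremum of cardinalities of discrete subspaces of Ult(B)). -/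
open Cardinal

universe u

/-- Ultrafilters on `B`, viewed as Boolean homomorphisms `B → 2`; these are the points
of the Stone space `Ult(B)`. -/
abbrev UltPt (B : Type u) [BooleanAlgebra B] := BoundedLatticeHom B Bool

/-- `x` is a right-separated sequence of points of length `κ`: every initial segment is
relatively open, as witnessed by clopen sets. -/
def RightSepPts {B : Type u} [BooleanAlgebra B] (κ : Ordinal.{u})
    (x : Ordinal.{u} → UltPt B) : Prop :=
  ∀ ξ < κ, ∃ b : B, x ξ b = true ∧ ∀ ζ : Ordinal, ξ < ζ → ζ < κ → x ζ b = false

/-- `Φ(W)`: the supremum of lengths of right-separated sequences of points inside `W`. -/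
noncomputable def PhiRS {B : Type u} [BooleanAlgebra B] (W : Set (UltPt B)) :
    Cardinal.{u} :=
  sSup {κ : Cardinal.{u} | ∃ x : Ordinal.{u} → UltPt B,
    (∀ ξ < κ.ord, x ξ ∈ W) ∧ RightSepPts κ.ord x}

/-- The spread of `B`: the supremum of sizes of discrete subspaces of `Ult(B)`,
expressed via sequences of points which are separated by clopen sets. -/
noncomputable def spreadPts (B : Type u) [BooleanAlgebra B] : Cardinal.{u} :=
  sSup {κ : Cardinal.{u} | ∃ x : Ordinal.{u} → UltPt B,
    ∀ ξ < κ.ord, ∃ b : B, x ξ b = true ∧ ∀ ζ < κ.ord, ζ ≠ ξ → x ζ b = false}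

/-- `Y` is a closed subset of the Stone space `Ult(B)`. -/
def IsClosedPts {B : Type u} [BooleanAlgebra B] (Y : Set (UltPt B)) : Prop :=
  ∀ p : UltPt B, p ∉ Y → ∃ b : B, p b = true ∧ ∀ q ∈ Y, q b = false

/-- `C` is a club (closed unbounded set) in `κ`. -/
def IsClubIn (C : Set Ordinal.{u}) (κ : Ordinal.{u}) : Prop :=
  (∀ α ∈ C, α < κ) ∧ (∀ α < κ, ∃ β ∈ C, α ≤ β) ∧
    ∀ δ < κ, Order.IsSuccLimit δ → (∀ α < δ, ∃ β ∈ C, α < β ∧ β < δ) → δ ∈ C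

/-- `S` is stationary in `κ`: it meets every club of `κ`. -/
def StationaryIn (S : Set Ordinal.{u}) (κ : Ordinal.{u}) : Prop :=
  ∀ C : Set Ordinal.{u}, IsClubIn C κ → (S ∩ C).Nonempty

lemma bool_inf : ∀ p q : Bool, p ⊓ q = (p && q) := by decide

lemma rs_card_le {B : Type u} [BooleanAlgebra B] {κ : Cardinal.{u}} {x : Ordinal.{u} → UltPt B}
    (h : ∀ ξ ζ : Ordinal.{u}, ξ < ζ → ζ < κ.ord → ∃ c : B, x ξ c = true ∧ x ζ c = false) :
    κ ≤ #(UltPt B) := by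
  have hinj : Function.Injective
      (fun t : κ.ord.ToType => x ((Ordinal.ToType.mk (o := κ.ord)).symm t : Ordinal)) := by
    intro t₁ t₂ ht
    by_contra hne
    have hne' : ((Ordinal.ToType.mk (o := κ.ord)).symm t₁ : Ordinal) ≠
        ((Ordinal.ToType.mk (o := κ.ord)).symm t₂ : Ordinal) := by
      intro hx
      exact hne ((Ordinal.ToType.mk (o := κ.ord)).symm.injective (Subtype.coe_injective hx))
    rcases hne'.lt_or_gt with hlt | hlt
    · obtain ⟨c, hc1, hc2⟩ := h _ _ hlt ((Ordinal.ToType.mk (o := κ.ord)).symm t₂).2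
      rw [show x ((Ordinal.ToType.mk (o := κ.ord)).symm t₁ : Ordinal) =
          x ((Ordinal.ToType.mk (o := κ.ord)).symm t₂ : Ordinal) from ht] at hc1
      rw [hc1] at hc2; exact absurd hc2 (by simp)
    · obtain ⟨c, hc1, hc2⟩ := h _ _ hlt ((Ordinal.ToType.mk (o := κ.ord)).symm t₁).2
      rw [show x ((Ordinal.ToType.mk (o := κ.ord)).symm t₁ : Ordinal) =
          x ((Ordinal.ToType.mk (o := κ.ord)).symm t₂ : Ordinal) from ht] at hc2
      rw [hc1] at hc2; exact absurd hc2 (by simp)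
  calc κ = #κ.ord.ToType := by simp
    _ ≤ #(UltPt B) := Cardinal.mk_le_of_injective hinj

lemma exists_mono_seq (ξ len : Ordinal.{u}) (hlen : ∀ α, α < len → α.card < ξ.cof)
    (U : Set Ordinal.{u}) (hU : ∀ ζ, ζ < ξ → ∃ η, η ∈ U ∧ ζ < η ∧ η < ξ) :
    ∃ g : Ordinal.{u} → Ordinal.{u}, (∀ α, α < len → g α ∈ U ∧ g α < ξ) ∧
      ∀ α β, α < β → β < len → g α < g β := by
  let F : ∀ α : Ordinal.{u}, (∀ β, β < α → Ordinal.{u}) → Ordinal.{u} :=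
    fun α rec => sInf {η | η ∈ U ∧ η < ξ ∧ ∀ β (hβ : β < α), rec β hβ < η}
  let g : Ordinal.{u} → Ordinal.{u} := Ordinal.lt_wf.fix F
  have geq : ∀ α, g α = sInf {η | η ∈ U ∧ η < ξ ∧ ∀ β (_ : β < α), g β < η} :=
    fun α => Ordinal.lt_wf.fix_eq F α
  have key : ∀ α, α < len → g α ∈ U ∧ g α < ξ ∧ ∀ β, β < α → g β < g α := by
    intro α
    induction α using Ordinal.induction with
    | _ α IH =>
      intro hα
      have hne : {η | η ∈ U ∧ η < ξ ∧ ∀ β (_ : β < α), g β < η}.Nonempty := by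
        have hbs : Ordinal.bsup α (fun β _ => g β) < ξ :=
          Ordinal.bsup_lt_ord (hlen α hα) (fun β hβ => (IH β hβ (hβ.trans hα)).2.1)
        obtain ⟨η, hηU, hlt, hηξ⟩ := hU _ hbs
        exact ⟨η, hηU, hηξ, fun β hβ => lt_of_le_of_lt (Ordinal.le_bsup _ β hβ) hlt⟩
      have hmem := csInf_mem hne
      rw [← geq α] at hmem
      exact ⟨hmem.1, hmem.2.1, hmem.2.2⟩
  exact ⟨g, fun α hα => ⟨(key α hα).1, (key α hα).2.1⟩, fun α β hαβ hβ => (key β hβ).2.2 α hαβ⟩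

/-- Claim 2.4 (cly3): with `s(B) < χ₀`, `⟨χ_i⟩` increasing with supremum the singular
cardinal `λ`, and `⟨x_ξ : ξ < χ_i⁺⟩` a right-separated sequence of points of a closed set
`Y ⊆ Ult(B)` witnessed by `b_ξ`, the set
`Z = {ξ < χ_i⁺ : cf(ξ) = χ_i ∧ ∃ a (x_ξ ∈ a ∧ Φ(a ∩ Y) < χ_i)}`
is not stationary in `χ_i⁺`. -/
theorem not_stationary_Z {B : Type u} [BooleanAlgebra B]
    (lam : Cardinal.{u}) (χ : Ordinal.{u} → Cardinal.{u})
    (hlam_inf : aleph0 ≤ lam) (hlam_sing : lam.ord.cof < lam)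
    (hχmono : ∀ i k : Ordinal, i < k → k < (lam.ord.cof).ord → χ i < χ k)
    (hχsup : lam = sSup {c : Cardinal.{u} | ∃ i < (lam.ord.cof).ord, c = χ i})
    (i : Ordinal.{u}) (hi : i < (lam.ord.cof).ord) (hχreg : (χ i).IsRegular)
    (hspread : spreadPts B < χ 0)
    (Y : Set (UltPt B)) (hY : IsClosedPts Y)
    (x : Ordinal.{u} → UltPt B) (b : Ordinal.{u} → B)
    (hxY : ∀ ξ < (Order.succ (χ i)).ord, x ξ ∈ Y)
    (hw1 : ∀ ξ < (Order.succ (χ i)).ord, x ξ (b ξ) = true)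
    (hw2 : ∀ ξ ζ : Ordinal, ξ < ζ → ζ < (Order.succ (χ i)).ord → x ζ (b ξ) = false) :
    ¬ StationaryIn
        {ξ : Ordinal.{u} | ξ < (Order.succ (χ i)).ord ∧ Ordinal.cof ξ = χ i ∧
          ∃ a : B, x ξ a = true ∧ PhiRS ({p : UltPt B | p a = true} ∩ Y) < χ i}
        (Order.succ (χ i)).ord := by
  intro hstat
  set κo : Ordinal.{u} := (Order.succ (χ i)).ord with hκo
  set Zs : Set Ordinal.{u} := {ξ : Ordinal.{u} | ξ < κo ∧ Ordinal.cof ξ = χ i ∧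
    ∃ a : B, x ξ a = true ∧ PhiRS ({p : UltPt B | p a = true} ∩ Y) < χ i} with hZs
  have haleph : ℵ₀ ≤ χ i := hχreg.aleph0_le
  have hreg : (Order.succ (χ i)).IsRegular := Cardinal.isRegular_succ haleph
  have hcof' : κo.cof = Order.succ (χ i) := by rw [hκo]; exact hreg.cof_eq
  have hκlim : Order.IsSuccLimit κo := by rw [hκo]; exact Cardinal.isSuccLimit_ord hreg.aleph0_le
  have hχlt : χ i < Order.succ (χ i) := Order.lt_succ _
  have hχ0 : χ 0 ≤ χ i := by
    rcases eq_or_ne i 0 with h | h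
    · rw [h]
    · exact (hχmono 0 i (pos_iff_ne_zero.2 h) hi).le
  -- boundedness of the supremum index sets
  have hbddPhi : ∀ W : Set (UltPt B), BddAbove {κ : Cardinal.{u} | ∃ x : Ordinal.{u} → UltPt B,
      (∀ ξ < κ.ord, x ξ ∈ W) ∧ RightSepPts κ.ord x} := by
    intro W
    refine ⟨#(UltPt B), fun κ' hκ' => ?_⟩
    obtain ⟨x', _, hrs⟩ := hκ'
    apply rs_card_le
    intro ξ ζ hlt hζ
    obtain ⟨c, hc1, hc2⟩ := hrs ξ (hlt.trans hζ)
    exact ⟨c, hc1, hc2 ζ hlt hζ⟩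
  have hbddS : BddAbove {κ : Cardinal.{u} | ∃ x : Ordinal.{u} → UltPt B,
      ∀ ξ < κ.ord, ∃ c : B, x ξ c = true ∧ ∀ ζ < κ.ord, ζ ≠ ξ → x ζ c = false} := by
    refine ⟨#(UltPt B), fun κ' hκ' => ?_⟩
    obtain ⟨x', h⟩ := hκ'
    apply rs_card_le
    intro ξ ζ hlt hζ
    obtain ⟨c, hc1, hc2⟩ := h ξ (hlt.trans hζ)
    exact ⟨c, hc1, hc2 ζ hζ (ne_of_gt hlt)⟩
  -- Step A : existence of a threshold ζ(ξ)
  have hzeta : ∀ ξ, ξ < κo → Ordinal.cof ξ = χ i →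
      ∀ a : B, PhiRS ({p : UltPt B | p a = true} ∩ Y) < χ i →
      ∃ ζ, ζ < ξ ∧ ∀ η, ζ < η → η < ξ → x η a = false := by
    intro ξ hξκ hcofξ a hPhi
    by_contra hcon
    push_neg at hcon
    obtain ⟨g, hg1, hg2⟩ := exists_mono_seq ξ (χ i).ord
      (fun α hα => by rw [hcofξ]; exact Cardinal.lt_ord.1 hα)
      {η | x η a = true}
      (fun ζ hζ => by
        obtain ⟨η, h1, h2, h3⟩ := hcon ζ hζ
        exact ⟨η, by simpa using h3, h1, h2⟩)
    have hmem : χ i ∈ {κ : Cardinal.{u} | ∃ x' : Ordinal.{u} → UltPt B,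
        (∀ ξ' < κ.ord, x' ξ' ∈ ({p : UltPt B | p a = true} ∩ Y)) ∧ RightSepPts κ.ord x'} := by
      refine ⟨fun α => x (g α), fun α hα => ?_, fun α hα => ?_⟩
      · exact ⟨(hg1 α hα).1, hxY _ ((hg1 α hα).2.trans hξκ)⟩
      · refine ⟨b (g α), hw1 _ ((hg1 α hα).2.trans hξκ), fun β hαβ hβ => ?_⟩
        exact hw2 (g α) (g β) (hg2 α β hαβ hβ) ((hg1 β hβ).2.trans hξκ)
    exact absurd (le_csSup (hbddPhi _) hmem :
      χ i ≤ PhiRS ({p : UltPt B | p a = true} ∩ Y)) (not_le.2 hPhi)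
  -- choose witnesses for members of Z
  have hch : ∀ ξ : Ordinal.{u}, ∃ p : B × Ordinal.{u}, ξ ∈ Zs →
      (x ξ p.1 = true ∧ p.2 < ξ ∧ ∀ η, p.2 < η → η < ξ → x η p.1 = false) := by
    intro ξ
    by_cases hmem : ξ ∈ Zs
    · obtain ⟨hξκ, hcofξ, a, ha1, ha2⟩ := hmem
      obtain ⟨ζ, hζξ, hζ⟩ := hzeta ξ hξκ hcofξ a ha2
      exact ⟨(a, ζ), fun _ => ⟨ha1, hζξ, hζ⟩⟩
    · exact ⟨(⊥, 0), fun h => absurd h hmem⟩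
  choose P hP using hch
  by_cases hex : ∃ δ, δ < κo ∧ ∀ γ, γ < κo → ∃ ξ, ξ ∈ Zs ∧ (P ξ).2 ≤ δ ∧ max γ δ < ξ
  · -- Case 1 : stationarily many ζ below a fixed δ₀ ⇒ big discrete family
    obtain ⟨δ₀, hδ₀, hub⟩ := hex
    obtain ⟨g, hg1, hg2⟩ := exists_mono_seq κo (χ i).ord
      (fun α hα => by rw [hcof']; exact (Cardinal.lt_ord.1 hα).trans hχlt)
      {ξ | ξ ∈ Zs ∧ (P ξ).2 ≤ δ₀ ∧ δ₀ < ξ}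
      (fun γ hγ => by
        obtain ⟨ξ, h1, h2, h3⟩ := hub γ hγ
        exact ⟨ξ, ⟨h1, h2, (le_max_right γ δ₀).trans_lt h3⟩,
          (le_max_left γ δ₀).trans_lt h3, h1.1⟩)
    have hmem : χ i ∈ {κ : Cardinal.{u} | ∃ x' : Ordinal.{u} → UltPt B,
        ∀ ξ < κ.ord, ∃ c : B, x' ξ c = true ∧ ∀ ζ < κ.ord, ζ ≠ ξ → x' ζ c = false} := by
      refine ⟨fun α => x (g α), fun α hα => ?_⟩
      obtain ⟨hZ, hzle, hδlt⟩ := (hg1 α hα).1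
      have hκα : g α < κo := (hg1 α hα).2
      have hPα := hP (g α) hZ
      refine ⟨(P (g α)).1 ⊓ b (g α), ?_, fun β hβ hne => ?_⟩
      · rw [map_inf, bool_inf, hPα.1, hw1 _ hκα]; rfl
      · rcases hne.lt_or_gt with hlt | hlt
        · have h1 : x (g β) ((P (g α)).1) = false :=
            hPα.2.2 (g β) (lt_of_le_of_lt hzle (hg1 β hβ).1.2.2) (hg2 β α hlt hα)
          rw [map_inf, bool_inf, h1, Bool.false_and]
        · have h1 : x (g β) (b (g α)) = false := hw2 _ _ (hg2 α β hlt hβ) ((hg1 β hβ).2)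
          rw [map_inf, bool_inf, h1, Bool.and_false]
    have : χ i ≤ spreadPts B := le_csSup hbddS hmem
    exact absurd (this.trans_lt hspread) (not_lt.2 hχ0)
  · -- Case 2 : every level set is bounded ⇒ club avoiding Z
    push_neg at hex
    have hG : ∀ δ : Ordinal.{u}, ∃ γ, δ < κo →
        (γ < κo ∧ ∀ ξ, ξ ∈ Zs → (P ξ).2 ≤ δ → ξ ≤ max γ δ) := by
      intro δ
      by_cases hδ : δ < κo
      · obtain ⟨γ, h1, h2⟩ := hex δ hδ
        exact ⟨γ, fun _ => ⟨h1, fun ξ hξ hζ => h2 ξ hξ hζ⟩⟩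
      · exact ⟨0, fun h => absurd h hδ⟩
    choose G hG using hG
    have hGlt : ∀ δ, δ < κo → G δ < κo := fun δ hδ => (hG δ hδ).1
    set C : Set Ordinal.{u} := {β | β < κo ∧ ∀ δ, δ < β → G δ < β} with hC
    have hclub : IsClubIn C κo := by
      refine ⟨fun β hβ => hβ.1, ?_, ?_⟩
      · intro α hα
        let f : ℕ → Ordinal.{u} := fun n =>
          Nat.rec α (fun _ βn => Order.succ (max βn (Ordinal.bsup βn (fun δ _ => G δ)))) n
        have hfs : ∀ n, f (n + 1) =
            Order.succ (max (f n) (Ordinal.bsup (f n) (fun δ _ => G δ))) := fun n => rfl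
        have hflt : ∀ n, f n < κo := by
          intro n; induction n with
          | zero => exact hα
          | succ n ih =>
            have hbs : Ordinal.bsup (f n) (fun δ _ => G δ) < κo :=
              Ordinal.bsup_lt_ord (by rw [hcof']; exact Cardinal.lt_ord.1 ih)
                (fun δ hδ => hGlt δ (hδ.trans ih))
            rw [hfs n]
            exact hκlim.succ_lt (max_lt ih hbs)
        have hsup : (⨆ n, f n) < κo := by
          apply Ordinal.iSup_lt_ord_lift _ hflt
          rw [hcof', Cardinal.mk_nat, Cardinal.lift_aleph0]
          exact haleph.trans_lt hχlt
        refine ⟨(⨆ n, f n), ⟨hsup, fun δ hδ => ?_⟩, Ordinal.le_iSup f 0⟩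
        obtain ⟨n, hn⟩ := Ordinal.lt_iSup_iff.1 hδ
        have : G δ < f (n + 1) := by
          rw [hfs n]
          exact ((Ordinal.le_bsup _ δ hn).trans (le_max_right _ _)).trans_lt (Order.lt_succ _)
        exact this.trans_le (Ordinal.le_iSup f (n + 1))
      · intro δ hδκ _ hacc
        refine ⟨hδκ, fun ε hε => ?_⟩
        obtain ⟨β, hβC, hεβ, hβδ⟩ := hacc ε hε
        exact (hβC.2 ε hεβ).trans hβδ
    obtain ⟨ξ, hξZ, hξC⟩ := hstat C hclub
    have hPξ := hP ξ hξZ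
    have hζξ : (P ξ).2 < ξ := hPξ.2.1
    have hζκ : (P ξ).2 < κo := hζξ.trans hξZ.1
    have hle := (hG _ hζκ).2 ξ hξZ le_rfl
    exact absurd hle (not_le.2 (max_lt (hξC.2 _ hζξ) hζξ))
end
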